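/- Assume ω_{134} ≠ ω_{234} and set D = ω_{134} − ω_{234}. Then the vectors v_{13}, v_{24}, v_{14}, v_{23} are expressed through v_{12} and v_{34} as follows: D·v_{13} = −(ω_{124} v_{12} + ω_{234} v_{34}), D·v_{24} = −(ω_{123} v_{12} + ω_{134} v_{34}), D·v_{14} = ω_{123} v_{12} + ω_{234} v_{34}, and D·v_{23} = ω_{124} v_{12} + ω_{134} v_{34}. -/

import Mathlib

/-!
Solving the first three relations for `v₁₄, v₂₃, v₂₄` in terms of `v₁₂, v₁₃, v₃₄` turns the
pairing `∑ ν_ij v_ij` into `ω₁₂₄ v₁₂ + (ω₁₃₄ - ω₂₃₄) v₁₃ + ω₂₃₄ v₃₄`. Its vanishing solves for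
`(ω₁₃₄ - ω₂₃₄) v₁₃`, and the other three identities follow by substituting back, using `δω = 0`.
-/

theorem pairing_eq_of_cycle_relations {R M : Type*} [CommRing R] [AddCommGroup M] [Module R M]
    (ν12 ν13 ν14 ν23 ν24 ν34 : R) (v12 v13 v14 v23 v24 v34 : M)
    (h1 : v12 + v13 + v14 = 0) (h2 : -v12 + v23 + v24 = 0) (h3 : -v13 - v23 + v34 = 0) :
    ν12 • v12 + ν13 • v13 + ν14 • v14 + ν23 • v23 + ν24 • v24 + ν34 • v34 =
      (ν24 - ν14 + ν12) • v12 + ((ν34 - ν14 + ν13) - (ν34 - ν24 + ν23)) • v13 +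
        (ν34 - ν24 + ν23) • v34 := by
  have e14 : v14 = -v12 - v13 := by linear_combination (norm := abel) h1
  have e23 : v23 = v34 - v13 := by linear_combination (norm := abel) -h3
  have e24 : v24 = v12 - v34 + v13 := by linear_combination (norm := abel) h2 + h3
  subst e14 e23 e24
  module

theorem edge_vectors_through_opposite_pair
    (U : Type*) [AddCommGroup U] [Module ℂ U]
    (ν12 ν13 ν14 ν23 ν24 ν34 ω123 ω124 ω134 ω234 : ℂ)
    (hω123 : ω123 = ν23 - ν13 + ν12) (hω124 : ω124 = ν24 - ν14 + ν12)
    (hω134 : ω134 = ν34 - ν14 + ν13) (hω234 : ω234 = ν34 - ν24 + ν23)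
    (v12 v13 v14 v23 v24 v34 : U)
    (h1 : v12 + v13 + v14 = 0) (h2 : -v12 + v23 + v24 = 0)
    (h3 : -v13 - v23 + v34 = 0)
    (h5 : ν12 • v12 + ν13 • v13 + ν14 • v14 + ν23 • v23 + ν24 • v24 + ν34 • v34 = 0) :
    (ω134 - ω234) • v13 = -(ω124 • v12 + ω234 • v34) ∧
    (ω134 - ω234) • v24 = -(ω123 • v12 + ω134 • v34) ∧
    (ω134 - ω234) • v14 = ω123 • v12 + ω234 • v34 ∧
    (ω134 - ω234) • v23 = ω124 • v12 + ω134 • v34 := by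
  have reduced_pairing : ω124 • v12 + (ω134 - ω234) • v13 + ω234 • v34 = 0 := by
    rw [hω124, hω134, hω234, ← pairing_eq_of_cycle_relations _ _ _ _ _ _ _ _ _ _ _ _ h1 h2 h3, h5]
  have ω_closed : ω123 - ω124 + ω134 - ω234 = 0 := by rw [hω123, hω124, hω134, hω234]; ring
  refine ⟨?_, ?_, ?_, ?_⟩
  · linear_combination (norm := module) reduced_pairing
  · linear_combination (norm := module) reduced_pairing + (ω134 - ω234) • (h2 + h3) + ω_closed • v12
  · linear_combination (norm := module) (ω134 - ω234) • h1 - reduced_pairing - ω_closed • v12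
  · linear_combination (norm := module) -reduced_pairing - (ω134 - ω234) • h3
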